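/- arXiv:1302.0488 — 2 statements merged into one kernel-verified Lean document; each statement's English description precedes it below -/
import Mathlib

section
/- Inserting a vehicle preserves physicality: if c is a physical configuration with support [m, M], σ is a vehicle state with position x, and n = Indx(σ, c) is the index such that all vehicles in cells with index < n have position < x and all vehicles in cells with index ≥ n have position > x, then Ins_n(σ, c) is again a physical configuration, and its support is [m, M+1]. -/
/-- A configuration: a cell is either empty (`none`) or carries a vehicle state. -/
def Config (V : Type*) := ℤ → Option V

/-- Inserting operator: shift all cells from index `n` one step right and put `σ` at `n`. -/
def Ins {V : Type*} (n : ℤ) (σ : V) (c : Config V) : Config V :=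
  fun i => if i < n then c i else if i = n then some σ else c (i - 1)

/-- `c` has support exactly the interval `[m, M]`. -/
def HasSupport {V : Type*} (c : Config V) (m M : ℤ) : Prop :=
  ∀ i : ℤ, (c i).isSome ↔ m ≤ i ∧ i ≤ M

/-- Positions are strictly increasing along adjacent nonempty cells. -/
def Sorted {V : Type*} (pos : V → ℝ) (c : Config V) : Prop :=
  ∀ i : ℤ, ∀ s s' : V, c i = some s → c (i + 1) = some s' → pos s < pos s'

/-- inserting a vehicle at its order-preserving index `n = Indx(σ, c)`
preserves physicality, and the support becomes `[m, M+1]`. -/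
theorem ins_preserves_physical
    {V : Type*} (pos : V → ℝ) (c : Config V) (σ : V) (m M n : ℤ)
    (hMm : m ≤ M)
    (hsupp : HasSupport c m M)
    (hsorted : Sorted pos c)
    (hn1 : m ≤ n) (hn2 : n ≤ M + 1)
    (hbelow : ∀ i : ℤ, ∀ s : V, c i = some s → i < n → pos s < pos σ)
    (habove : ∀ i : ℤ, ∀ s : V, c i = some s → n ≤ i → pos σ < pos s) :
    HasSupport (Ins n σ c) m (M + 1) ∧ Sorted pos (Ins n σ c) := by
  constructor
  · intro i
    unfold Ins
    split_ifs with h1 h2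
    · rw [hsupp i]; omega
    · simp only [Option.isSome_some, true_iff]; omega
    · rw [hsupp (i - 1)]; omega
  · intro i s s' hs hs'
    unfold Ins at hs hs'
    split_ifs at hs hs' with h1 h2 h3 h4 h5 h6
    · exact hsorted i s s' hs hs'
    · cases Option.some.inj hs'
      exact hbelow i s hs h1
    · omega
    · omega
    · omega
    · cases Option.some.inj hs
      have e : i + 1 - 1 = i := by omega
      rw [e] at hs'
      exact habove i s' hs' (by omega)
    · omega
    · omega
    · have e : i + 1 - 1 = (i - 1) + 1 := by omega
      rw [e] at hs'
      exact hsorted (i - 1) s s' hs hs'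
end

section
/- The multi-lane CCA 𝓜𝓛 simulates the Update procedure with a linear time factor: for an M-lane road encoded as the configuration 𝒞 = (ω₀,…,ω_{M−1}) with ω_i = (c_i, copy, M, i, 0), applying the global transition function Δ* exactly 2M times yields Δ*^{2M}(𝒞) = (ω₀',…,ω_{M−1}') with ω_i' = (c_i', copy, M, i, 0) where (c₀',…,c_{M−1}') = Update(c₀,…,c_{M−1}). -/
def mlStep {Conf : Type*}
    (copyL copyR eraseOp : Conf → Conf → Conf) (δ01 δ11 δ10 : Conf → Conf)
    (M i : ℕ) (cs : ℕ → Conf) : ℕ → Conf :=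
  if i = 0 then
    -- c₁ := c₀ ↣_R c₁ ; c₀ := c₀ ∖ c₁
    let a := Function.update cs 1 (copyR (cs 0) (cs 1))
    Function.update a 0 (eraseOp (a 0) (a 1))
  else if i < M - 1 then
    -- c_{i-1} := c_i ↣_L c_{i-1} ; c_i := c_i ∖ c_{i-1}
    let a := Function.update cs (i - 1) (copyL (cs i) (cs (i - 1)))
    let b := Function.update a i (eraseOp (a i) (a (i - 1)))
    -- c_{i+1} := c_i ↣_R c_{i+1} ; c_i := c_i ∖ c_{i+1}
    let c := Function.update b (i + 1) (copyR (b i) (b (i + 1)))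
    let d := Function.update c i (eraseOp (c i) (c (i + 1)))
    if i = 1 then Function.update d 0 (δ01 (d 0))
    else Function.update d (i - 1) (δ11 (d (i - 1)))
  else
    -- i = M-1
    let a := Function.update cs (M - 2) (copyL (cs (M - 1)) (cs (M - 2)))
    let b := Function.update a (M - 1) (eraseOp (a (M - 1)) (a (M - 2)))
    let c := Function.update b (M - 2) (δ11 (b (M - 2)))
    Function.update c (M - 1) (δ10 (c (M - 1)))

/-- The full sequential multi-lane update (Algorithm 2), scanning the lanes
from the left-most (`0`) to the right-most (`M-1`). -/
def mlUpdate {Conf : Type*}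
    (copyL copyR eraseOp : Conf → Conf → Conf) (δ01 δ11 δ10 : Conf → Conf)
    (M : ℕ) (cs : ℕ → Conf) : ℕ → Conf :=
  (List.range M).foldl (fun ds i => mlStep copyL copyR eraseOp δ01 δ11 δ10 M i ds) cs

/-!
Processing lane `i` of the sequential `Update` takes two synchronous steps of the automaton.
In the first, lane `i` hands vehicles to lane `i - 1` and erases them; in the second, it hands
vehicles to lane `i + 1` and erases them, while lane `i - 1`, which will not change any more,
applies the single-lane dynamics. Two steps are needed because what lane `i + 1` receives
depends on lane `i - 1`, two cells away. (Lane `0` has no left neighbour: its copy into lane `1`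
happens in the first step and the erase in the second.) Every cell stores `M`, its lane index
and a timer running modulo `2M`, from which it reads which lane is being processed and in which
phase; after `2M` steps every lane has been processed and the timer is back at `0`.
-/

namespace MultilaneCCA

variable {Conf : Type*}

/-- `none` is the quiescent state `⊥`; a lane cell is `(c, copy, M, lane index, timer)`. -/
abbrev Cell (Conf : Type*) := Option (Conf × Bool × ℕ × ℕ × ℕ)

def Cell.confOr (o : Cell Conf) (d : Conf) : Conf :=
  o.elim d (·.1)

def globalMap (Δ : Cell Conf → Cell Conf → Cell Conf → Cell Conf) (f : ℤ → Cell Conf) :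
    ℤ → Cell Conf :=
  fun z => Δ (f (z - 1)) (f z) (f (z + 1))

section Simulation

variable (rule : ℕ → ℕ → ℕ → Conf → Conf → Conf → Conf)

/-- `rule M K j l c r` is the new configuration of lane `j` at timer `K`, given its own
configuration `c` and those of its neighbours `l` and `r`. -/
def localRule (l c r : Cell Conf) : Cell Conf :=
  match c with
  | none => none
  | some (x, copy, M, j, K) =>
    some (rule M K j (l.confOr x) x (r.confOr x), !copy, M, j, (K + 1) % (2 * M))

/-- A boundary lane sees its own configuration in place of the missing neighbour
(for `j = 0` through the truncated subtraction `0 - 1 = 0`), as `localRule` does next to `⊥`. -/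
def laneStep (M t : ℕ) (g : ℕ → Conf) (j : ℕ) : Conf :=
  rule M (t % (2 * M)) j (g (j - 1)) (g j) (if j + 1 < M then g (j + 1) else g j)

def laneRun (M : ℕ) (cs : ℕ → Conf) : ℕ → ℕ → Conf
  | 0 => cs
  | t + 1 => laneStep rule M t (laneRun M cs t)

def encode (M t : ℕ) (g : ℕ → Conf) : ℤ → Cell Conf :=
  fun z => if 0 ≤ z ∧ z < M then
    some (g z.toNat, decide (t % 2 = 0), M, z.toNat, t % (2 * M)) else none

theorem globalMap_localRule_encode (M t : ℕ) (g : ℕ → Conf) :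
    globalMap (localRule rule) (encode M t g) = encode M (t + 1) (laneStep rule M t g) := by
  funext z
  by_cases hz : 0 ≤ z ∧ z < M
  · have hleft : (encode M t g (z - 1)).confOr (g z.toNat) = g (z.toNat - 1) := by
      by_cases hz0 : z = 0
      · simp [encode, Cell.confOr, hz0]
      · rw [encode, if_pos (by omega), (by omega : (z - 1).toNat = z.toNat - 1)]
        rfl
    have hright : (encode M t g (z + 1)).confOr (g z.toNat) =
        if z.toNat + 1 < M then g (z.toNat + 1) else g z.toNat := by
      by_cases hzM : z + 1 < M
      · rw [encode, if_pos (by omega), if_pos (by omega), (by omega : (z + 1).toNat = z.toNat + 1)]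
        rfl
      · rw [encode, if_neg (by omega), if_neg (by omega)]
        rfl
    have hcenter : encode M t g z =
        some (g z.toNat, decide (t % 2 = 0), M, z.toNat, t % (2 * M)) := if_pos hz
    have hparity : (!decide (t % 2 = 0)) = decide ((t + 1) % 2 = 0) := by
      rcases Nat.mod_two_eq_zero_or_one t with h | h <;> simp [Nat.add_mod, h]
    rw [globalMap, hcenter, localRule, hleft, hright, hparity, Nat.mod_add_mod, encode, if_pos hz]
    rfl
  · simp [globalMap, encode, localRule, hz]

theorem iterate_globalMap_localRule_encode (M n : ℕ) (cs : ℕ → Conf) :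
    (globalMap (localRule rule))^[n] (encode M 0 cs) = encode M n (laneRun rule M cs n) := by
  induction n with
  | zero => rfl
  | succ n ih =>
    rw [Function.iterate_succ_apply', ih, globalMap_localRule_encode]
    rfl

end Simulation

section Multilane

variable (copyL copyR eraseOp : Conf → Conf → Conf) (δ01 δ11 δ10 : Conf → Conf)

/-- With timer `K`, lane `K / 2` is processed, in its copy phase if `K` is even and in its
erase phase if `K` is odd. A lane erases what a neighbour copies from it by recomputing that
copy itself. -/
def mlRule (M K j : ℕ) (l c r : Conf) : Conf :=
  let i := K / 2
  if K % 2 = 0 then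
    if i = 0 then (if j = 1 then copyR l c else c)
    else if j = i - 1 then copyL r c
    else if j = i then eraseOp c (copyL c l)
    else c
  else
    if i = 0 then (if j = 0 then eraseOp c r else c)
    else if i < M - 1 then
      if j = i + 1 then copyR l c
      else if j = i then eraseOp c (copyR c r)
      else if j = i - 1 then (if i = 1 then δ01 c else δ11 c)
      else c
    else
      if j = i - 1 then δ11 c
      else if j = i then δ10 c
      else c

variable {copyL copyR eraseOp δ01 δ11 δ10}

local notation "R" => mlRule copyL copyR eraseOp δ01 δ11 δ10

open Function

theorem laneStep_mlRule_copy_zero (M : ℕ) (u : ℕ → Conf) :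
    laneStep R M 0 u = update u 1 (copyR (u 0) (u 1)) := by
  funext j
  rcases (by omega : j = 0 ∨ j = 1 ∨ 1 < j) with rfl | rfl | hj
  · simp [laneStep, mlRule]
  · simp [laneStep, mlRule]
  · simp [laneStep, mlRule, hj.ne']

theorem laneStep_mlRule_copy_of_pos {M i : ℕ} (hi0 : 0 < i) (hi : i < M) (u : ℕ → Conf) :
    laneStep R M (2 * i) u = update (update u (i - 1) (copyL (u i) (u (i - 1)))) i
      (eraseOp (u i) (copyL (u i) (u (i - 1)))) := by
  have ht : 2 * i % (2 * M) = 2 * i := Nat.mod_eq_of_lt (by omega)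
  have hne : i - 1 ≠ i := by omega
  have hsub : i - 1 + 1 = i := by omega
  funext j
  rcases (by omega : i - 1 = j ∨ i = j ∨ (j ≠ i - 1 ∧ j ≠ i)) with rfl | rfl | ⟨h1, h2⟩
  · simp [laneStep, mlRule, ht, hi0.ne', hi, hne, hsub]
  · simp [laneStep, mlRule, ht, hi0.ne', hne.symm]
  · simp [laneStep, mlRule, ht, hi0.ne', h1, h2]

theorem laneStep_mlRule_erase_zero {M : ℕ} (hM : 2 ≤ M) (v : ℕ → Conf) :
    laneStep R M 1 v = update v 0 (eraseOp (v 0) (v 1)) := by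
  have ht : 1 % (2 * M) = 1 := Nat.mod_eq_of_lt (by omega)
  funext j
  rcases (by omega : j = 0 ∨ 0 < j) with rfl | hj
  · simp [laneStep, mlRule, ht, (by omega : 1 < M)]
  · simp [laneStep, mlRule, ht, hj.ne']

theorem laneStep_mlRule_erase_of_lt {M i : ℕ} (hi0 : 0 < i) (hi : i < M - 1) (v : ℕ → Conf) :
    laneStep R M (2 * i + 1) v =
      update (update (update v (i + 1) (copyR (v i) (v (i + 1)))) i
        (eraseOp (v i) (copyR (v i) (v (i + 1))))) (i - 1)
        (if i = 1 then δ01 (v (i - 1)) else δ11 (v (i - 1))) := by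
  have ht : (2 * i + 1) % (2 * M) = 2 * i + 1 := Nat.mod_eq_of_lt (by omega)
  have hd : (2 * i + 1) / 2 = i := by omega
  have hne : i - 1 ≠ i := by omega
  have hne' : i - 1 ≠ i + 1 := by omega
  have hsucc : i + 1 < M := by omega
  funext j
  rcases (by omega : i - 1 = j ∨ i = j ∨ i + 1 = j ∨ (j ≠ i - 1 ∧ j ≠ i ∧ j ≠ i + 1))
    with rfl | rfl | rfl | ⟨h1, h2, h3⟩
  · simp [laneStep, mlRule, ht, hd, hi0.ne', hi, hne, hne']
  · simp [laneStep, mlRule, ht, hd, hi0.ne', hi, hne.symm, hsucc]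
  · simp [laneStep, mlRule, ht, hd, hi0.ne', hi, hne'.symm]
  · simp [laneStep, mlRule, ht, hd, hi0.ne', hi, h1, h2, h3]

theorem laneStep_mlRule_erase_last {M : ℕ} (hM : 2 ≤ M) (v : ℕ → Conf) :
    laneStep R M (2 * (M - 1) + 1) v =
      update (update v (M - 2) (δ11 (v (M - 2)))) (M - 1) (δ10 (v (M - 1))) := by
  have ht : (2 * (M - 1) + 1) % (2 * M) = 2 * (M - 1) + 1 := Nat.mod_eq_of_lt (by omega)
  have hd : (2 * (M - 1) + 1) / 2 = M - 1 := by omega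
  have hpos : M - 1 ≠ 0 := by omega
  have hsub : M - 1 - 1 = M - 2 := by omega
  have hne : M - 2 ≠ M - 1 := by omega
  funext j
  rcases (by omega : M - 2 = j ∨ M - 1 = j ∨ (j ≠ M - 2 ∧ j ≠ M - 1)) with rfl | rfl | ⟨h1, h2⟩
  · simp [laneStep, mlRule, ht, hd, hpos, hsub, hne]
  · simp [laneStep, mlRule, ht, hd, hpos, hsub, hne.symm]
  · simp [laneStep, mlRule, ht, hd, hpos, hsub, h1, h2]

theorem laneStep_laneStep_mlRule_eq_mlStep {M i : ℕ} (hM : 2 ≤ M) (hi : i < M)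
    (u : ℕ → Conf) :
    laneStep R M (2 * i + 1) (laneStep R M (2 * i) u) =
      mlStep copyL copyR eraseOp δ01 δ11 δ10 M i u := by
  rcases Nat.eq_zero_or_pos i with rfl | hi0
  · rw [laneStep_mlRule_copy_zero, laneStep_mlRule_erase_zero hM]
    simp [mlStep]
  rw [laneStep_mlRule_copy_of_pos hi0 hi]
  by_cases hlast : i < M - 1
  · rw [laneStep_mlRule_erase_of_lt hi0 hlast]
    by_cases hi1 : i = 1
    · subst hi1
      simp [mlStep, hlast]
    · have hne : i - 1 ≠ i := by omega
      have hne' : i + 1 ≠ i - 1 := by omega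
      simp [mlStep, hi0.ne', hlast, hi1, hne, hne.symm, hne', hne'.symm]
  · obtain rfl : i = M - 1 := by omega
    rw [laneStep_mlRule_erase_last hM]
    have hsub : M - 1 - 1 = M - 2 := by omega
    have hne : M - 1 ≠ M - 2 := by omega
    simp [mlStep, hi0.ne', hsub, hne, hne.symm]

theorem laneRun_mlRule_two_mul {M : ℕ} (hM : 2 ≤ M) (cs : ℕ → Conf) {i : ℕ} (hi : i ≤ M) :
    laneRun R M cs (2 * i) =
      (List.range i).foldl (fun ds k => mlStep copyL copyR eraseOp δ01 δ11 δ10 M k ds) cs := by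
  induction i with
  | zero => rfl
  | succ i ih =>
    rw [List.range_succ, List.foldl_append, List.foldl_cons, List.foldl_nil,
      ← laneStep_laneStep_mlRule_eq_mlStep hM hi, ← ih (by omega)]
    rfl

end Multilane

end MultilaneCCA

/-- there is a CCA `𝓜𝓛` with state set
`Ω = (Conf × {copy, erase} × ℕ³) ∪ {⊥}` and von Neumann neighborhood whose
global transition function `Δ*`, applied `2M` times to the encoding
`𝒞 = (ω₀,…,ω_{M−1})`, `ω_i = (c_i, copy, M, i, 0)`, yields the encoding of
`Update(c₀,…,c_{M−1})`. (`copy` is encoded as `true`.) -/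
theorem multilane_CCA_simulates_update
    {Conf : Type*} (copyL copyR eraseOp : Conf → Conf → Conf)
    (δ01 δ11 δ10 : Conf → Conf) :
    ∃ Δ : Option (Conf × Bool × ℕ × ℕ × ℕ) → Option (Conf × Bool × ℕ × ℕ × ℕ) →
          Option (Conf × Bool × ℕ × ℕ × ℕ) → Option (Conf × Bool × ℕ × ℕ × ℕ),
      Δ none none none = none ∧
      ∀ M : ℕ, 2 ≤ M → ∀ cs : ℕ → Conf,
        (fun f : ℤ → Option (Conf × Bool × ℕ × ℕ × ℕ) =>
            fun i : ℤ => Δ (f (i - 1)) (f i) (f (i + 1)))^[2 * M]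
          (fun i : ℤ => if 0 ≤ i ∧ i < (M : ℤ) then
              some (cs i.toNat, true, M, i.toNat, 0) else none)
        = fun i : ℤ => if 0 ≤ i ∧ i < (M : ℤ) then
              some (mlUpdate copyL copyR eraseOp δ01 δ11 δ10 M cs i.toNat,
                true, M, i.toNat, 0) else none := by
  let rule := MultilaneCCA.mlRule copyL copyR eraseOp δ01 δ11 δ10
  refine ⟨MultilaneCCA.localRule rule, rfl, fun M hM cs => ?_⟩
  have hinit : (fun i : ℤ => if 0 ≤ i ∧ i < (M : ℤ) then
      some (cs i.toNat, true, M, i.toNat, 0) else none) = MultilaneCCA.encode M 0 cs := by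
    funext z
    simp [MultilaneCCA.encode]
  rw [hinit]
  refine (MultilaneCCA.iterate_globalMap_localRule_encode rule M (2 * M) cs).trans ?_
  rw [MultilaneCCA.laneRun_mlRule_two_mul hM cs le_rfl]
  funext z
  simp [MultilaneCCA.encode, mlUpdate]
end
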